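/- arXiv:1103.3843 — 7 statements merged into one kernel-verified Lean document; each statement's English description precedes it below -/
import Mathlib

section
/- Let (X,d,ν) be a metric measure space where ν is a Borel measure with 0 < ν(X) < ∞ and supp ν = X, and suppose diam X < D and that (X,d,ν) satisfies the Bishop–Gromov comparison with parameters (K,N), where N > 1 and, if K > 0, additionally D ≤ π·√((N−1)/K). Let 0 < ε < 2D. If p₁,…,p_n are points of X such that the open balls B(p_k, ε/2), k = 1,…,n, are pairwise disjoint, then n · ∫₀^{ε/2} S_K^N(t) dt ≤ ∫₀^{D} S_K^N(t) dt. -/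
open MeasureTheory Metric

/-- The comparison function `S_K^N`. -/
noncomputable def SKN (K N t : ℝ) : ℝ :=
  if 0 < K then Real.sin (Real.sqrt (K / (N - 1)) * t) ^ (N - 1)
  else if K = 0 then t ^ (N - 1)
  else Real.sinh (Real.sqrt (|K| / (N - 1)) * t) ^ (N - 1)

/-- `(X,d,ν)` satisfies the Bishop–Gromov comparison with parameters `(K,N)`:
for every `x` and all `0 < r ≤ R`,
`ν(B(x,r)) · ∫₀^R S_K^N ≥ ν(B(x,R)) · ∫₀^r S_K^N`. -/
def BishopGromov {X : Type*} [MetricSpace X] [MeasurableSpace X]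
    (ν : Measure X) (K N : ℝ) : Prop :=
  ∀ (x : X) (r R : ℝ), 0 < r → r ≤ R →
    ν (ball x R) * ENNReal.ofReal (∫ t in (0:ℝ)..r, SKN K N t) ≤
      ν (ball x r) * ENNReal.ofReal (∫ t in (0:ℝ)..R, SKN K N t)

open Set ENNReal Function

/-! Every ball of radius `D` is the whole space, so Bishop–Gromov with `r = ε/2`, `R = D` bounds
`ν(X) · ∫₀^{ε/2} S` by `ν(B(p_k, ε/2)) · ∫₀^D S` for each `k`. Summing over the disjoint balls gives
`n · ν(X) · ∫₀^{ε/2} S ≤ ν(X) · ∫₀^D S`, and `ν(X)` cancels since `0 < ν(X) < ∞`.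
The bound `D ≤ π √((N-1)/K)` keeps `S_K^N ≥ 0` on `[0, D]`, which is what lets the inequality
pass from `ℝ≥0∞` back to `ℝ`. -/

theorem Real.sqrt_mul_sqrt_inv_le_one (x : ℝ) : √x * √x⁻¹ ≤ 1 := by
  rcases le_or_gt x 0 with hx | hx
  · simp [Real.sqrt_eq_zero_of_nonpos hx]
  · rw [← Real.sqrt_mul hx.le, mul_inv_cancel₀ hx.ne', Real.sqrt_one]

theorem SKN_nonneg {K N D t : ℝ} (hK : 0 < K → D ≤ Real.pi * √((N - 1) / K))
    (ht0 : 0 ≤ t) (htD : t ≤ D) : 0 ≤ SKN K N t := by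
  unfold SKN
  split_ifs with hKpos
  · refine Real.rpow_nonneg (Real.sin_nonneg_of_nonneg_of_le_pi (by positivity) ?_) _
    calc √(K / (N - 1)) * t ≤ √(K / (N - 1)) * (Real.pi * √((N - 1) / K)) := by
          gcongr; exact htD.trans (hK hKpos)
      _ = Real.pi * (√(K / (N - 1)) * √(K / (N - 1))⁻¹) := by rw [← inv_div K]; ring
      _ ≤ Real.pi := mul_le_of_le_one_right Real.pi_pos.le (Real.sqrt_mul_sqrt_inv_le_one _)
  · exact Real.rpow_nonneg ht0 _
  · exact Real.rpow_nonneg (by positivity) _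

theorem integral_SKN_nonneg {K N D : ℝ} (hK : 0 < K → D ≤ Real.pi * √((N - 1) / K))
    {r : ℝ} (hr : 0 ≤ r) (hrD : r ≤ D) : 0 ≤ ∫ t in (0:ℝ)..r, SKN K N t :=
  intervalIntegral.integral_nonneg hr fun _ ht => SKN_nonneg hK ht.1 (ht.2.trans hrD)

theorem Metric.ball_eq_univ_of_ediam_univ_lt {X : Type*} [PseudoMetricSpace X] {D : ℝ}
    (hdiam : Metric.ediam (univ : Set X) < ENNReal.ofReal D) (x : X) : ball x D = univ :=
  eq_univ_of_forall fun y => mem_ball.2 <| edist_lt_ofReal.1 <|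
    (Metric.edist_le_ediam_of_mem (mem_univ y) (mem_univ x)).trans_lt hdiam

theorem BishopGromov.measure_univ_mul_le {X : Type*} [MetricSpace X] [MeasurableSpace X]
    {ν : Measure X} {K N D : ℝ} (hBG : BishopGromov ν K N)
    (hdiam : Metric.ediam (univ : Set X) < ENNReal.ofReal D) (x : X) {r : ℝ} (hr : 0 < r)
    (hrD : r ≤ D) :
    ν univ * ENNReal.ofReal (∫ t in (0:ℝ)..r, SKN K N t) ≤
      ν (ball x r) * ENNReal.ofReal (∫ t in (0:ℝ)..D, SKN K N t) := by
  simpa only [ball_eq_univ_of_ediam_univ_lt hdiam] using hBG x r D hr hrD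

theorem MeasureTheory.card_mul_le_of_measure_univ_mul_le {α ι : Type*} [MeasurableSpace α]
    [Fintype ι] {μ : Measure α} (h0 : μ univ ≠ 0) (htop : μ univ ≠ ∞) {s : ι → Set α}
    (hs : ∀ i, NullMeasurableSet (s i) μ) (hdisj : Pairwise (AEDisjoint μ on s)) {a b : ℝ≥0∞}
    (h : ∀ i, μ univ * a ≤ μ (s i) * b) : Fintype.card ι * a ≤ b := by
  refine (ENNReal.mul_le_mul_iff_right h0 htop).1 ?_
  calc μ univ * (Fintype.card ι * a) = ∑ i, μ univ * a := by
        rw [Finset.sum_const, nsmul_eq_mul, Finset.card_univ]; ring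
    _ ≤ ∑ i, μ (s i) * b := Finset.sum_le_sum fun i _ => h i
    _ = (∑ i, μ (s i)) * b := (Finset.sum_mul ..).symm
    _ ≤ μ univ * b := by
        gcongr
        exact sum_measure_le_measure_univ (fun i _ => hs i) fun i _ j _ hij => hdisj hij

theorem stmt0_general {X : Type*} [MetricSpace X] [MeasurableSpace X] [BorelSpace X]
    (ν : Measure X) (K N D ε : ℝ)
    (hν0 : 0 < ν Set.univ) (hνfin : ν Set.univ < ⊤)
    (hdiam : EMetric.diam (Set.univ : Set X) < ENNReal.ofReal D)
    (hK : 0 < K → D ≤ Real.pi * Real.sqrt ((N - 1) / K))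
    (hBG : BishopGromov ν K N)
    (hε : 0 < ε) (hεD : ε < 2 * D)
    (n : ℕ) (p : Fin n → X)
    (hdisj : ∀ i j : Fin n, i ≠ j →
      Disjoint (ball (p i) (ε / 2)) (ball (p j) (ε / 2))) :
    (n : ℝ) * ∫ t in (0:ℝ)..(ε / 2), SKN K N t ≤ ∫ t in (0:ℝ)..D, SKN K N t := by
  have hpacking : (n : ℝ≥0∞) * ENNReal.ofReal (∫ t in (0:ℝ)..(ε / 2), SKN K N t) ≤
      ENNReal.ofReal (∫ t in (0:ℝ)..D, SKN K N t) := by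
    simpa using card_mul_le_of_measure_univ_mul_le hν0.ne' hνfin.ne
      (fun _ => measurableSet_ball.nullMeasurableSet) (fun i j hij => (hdisj i j hij).aedisjoint)
      fun k => hBG.measure_univ_mul_le hdiam (p k) (half_pos hε) (by linarith)
  rwa [← ENNReal.ofReal_natCast, ← ENNReal.ofReal_mul n.cast_nonneg,
    ENNReal.ofReal_le_ofReal_iff (integral_SKN_nonneg hK (by linarith) le_rfl)] at hpacking

theorem stmt0 {X : Type*} [MetricSpace X] [MeasurableSpace X] [BorelSpace X]
    (ν : Measure X) (K N D ε : ℝ) (hN : 1 < N)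
    (hν0 : 0 < ν Set.univ) (hνfin : ν Set.univ < ⊤)
    (hsupp : ∀ (x : X) (r : ℝ), 0 < r → 0 < ν (ball x r))
    (hdiam : EMetric.diam (Set.univ : Set X) < ENNReal.ofReal D)
    (hK : 0 < K → D ≤ Real.pi * Real.sqrt ((N - 1) / K))
    (hBG : BishopGromov ν K N)
    (hε : 0 < ε) (hεD : ε < 2 * D)
    (n : ℕ) (p : Fin n → X)
    (hdisj : ∀ i j : Fin n, i ≠ j →
      Disjoint (ball (p i) (ε / 2)) (ball (p j) (ε / 2))) :
    (n : ℝ) * ∫ t in (0:ℝ)..(ε / 2), SKN K N t ≤ ∫ t in (0:ℝ)..D, SKN K N t :=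
  stmt0_general ν K N D ε hν0 hνfin hdiam hK hBG hε hεD n p hdisj
end

section
/- Let (X,d,ν) be a metric measure space where ν is a Borel measure with 0 < ν(X) < ∞ and supp ν = X, and suppose diam X < D and that (X,d,ν) satisfies the Bishop–Gromov comparison with parameters (K,N), where N > 1 and, if K > 0, additionally 9ε/2 ≤ π·√((N−1)/K). Let ε > 0 and let p₁,…,p_n be points of X such that the open balls B(p_k, ε/2) are pairwise disjoint. Then for every x ∈ X, the number m of indices j ∈ {1,…,n} such that B(x,ε) ∩ B(p_j,ε) ≠ ∅ satisfies m · ∫₀^{ε/2} S_K^N(t) dt ≤ ∫₀^{9ε/2} S_K^N(t) dt. In particular this bound is independent of x. -/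
open MeasureTheory Metric

/-!
Put `B = B(x, 5ε/2)`. If `B(x, ε)` meets `B(p_j, ε)` then `d(x, p_j) < 2ε`, so
`B(p_j, ε/2) ⊆ B ⊆ B(p_j, 9ε/2)`, and Bishop–Gromov between the radii `ε/2` and `9ε/2` at `p_j`
gives `ν(B) ∫₀^{ε/2} S ≤ ν(B(p_j, ε/2)) ∫₀^{9ε/2} S`. Summing over the `m` such indices and using
that the balls `B(p_j, ε/2)` are disjoint subsets of `B`, we get `m ν(B) ∫₀^{ε/2} S ≤ ν(B) ∫₀^{9ε/2} S`,
and `0 < ν(B) < ∞` can be cancelled.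
-/

open Finset Real
open scoped ENNReal

theorem SKN_nonneg_s1 {K N R t : ℝ} (hK : 0 < K → R ≤ π * √((N - 1) / K)) (ht : 0 ≤ t)
    (htR : t ≤ R) : 0 ≤ SKN K N t := by
  unfold SKN
  split_ifs with hKpos
  · refine rpow_nonneg (sin_nonneg_of_nonneg_of_le_pi (by positivity) ?_) _
    calc √(K / (N - 1)) * t ≤ √(K / (N - 1)) * (π * √((N - 1) / K)) := by
          gcongr; exact htR.trans (hK hKpos)
      _ = π * (√(K / (N - 1)) * (√(K / (N - 1)))⁻¹) := by rw [← sqrt_inv, inv_div]; ring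
      _ ≤ π := mul_le_of_le_one_right pi_pos.le mul_inv_le_one
  · exact rpow_nonneg ht _
  · exact rpow_nonneg (by positivity) _

theorem integral_SKN_nonneg_s1 {K N R : ℝ} (hK : 0 < K → R ≤ π * √((N - 1) / K)) (hR : 0 ≤ R) :
    0 ≤ ∫ t in (0:ℝ)..R, SKN K N t :=
  intervalIntegral.integral_nonneg hR fun _ ht => SKN_nonneg_s1 hK ht.1 ht.2

theorem BishopGromov.measure_mul_le {X : Type*} [MetricSpace X] [MeasurableSpace X]
    {ν : Measure X} {K N : ℝ} (hBG : BishopGromov ν K N) {B : Set X} {y : X} {r R : ℝ}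
    (hr : 0 < r) (hrR : r ≤ R) (hB : B ⊆ ball y R) :
    ν B * ENNReal.ofReal (∫ t in (0:ℝ)..r, SKN K N t) ≤
      ν (ball y r) * ENNReal.ofReal (∫ t in (0:ℝ)..R, SKN K N t) :=
  (mul_le_mul_left (measure_mono hB) _).trans (hBG y r R hr hrR)

theorem card_mul_le_of_pairwiseDisjoint {α ι : Type*} [MeasurableSpace α] {μ : Measure α}
    {s : Finset ι} {A : ι → Set α} {B : Set α} {a b : ℝ≥0∞}
    (hA : ∀ j ∈ s, MeasurableSet (A j)) (hdisj : (s : Set ι).PairwiseDisjoint A)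
    (hAB : ∀ j ∈ s, A j ⊆ B) (hB0 : μ B ≠ 0) (hBtop : μ B ≠ ∞)
    (hle : ∀ j ∈ s, μ B * a ≤ μ (A j) * b) :
    (#s : ℝ≥0∞) * a ≤ b := by
  refine (ENNReal.mul_le_mul_iff_right hB0 hBtop).mp ?_
  calc μ B * (#s * a) = ∑ _j ∈ s, μ B * a := by rw [sum_const, nsmul_eq_mul]; ring
    _ ≤ ∑ j ∈ s, μ (A j) * b := sum_le_sum hle
    _ = μ (⋃ j ∈ s, A j) * b := by rw [measure_biUnion_finset hdisj hA, sum_mul]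
    _ ≤ μ B * b := by gcongr; exact Set.iUnion₂_subset hAB

theorem stmt1_general {X : Type*} [MetricSpace X] [MeasurableSpace X] [BorelSpace X]
    (ν : Measure X) (K N ε : ℝ)
    (hνfin : ν Set.univ < ⊤)
    (hsupp : ∀ (x : X) (r : ℝ), 0 < r → 0 < ν (ball x r))
    (hK : 0 < K → 9 * ε / 2 ≤ Real.pi * Real.sqrt ((N - 1) / K))
    (hBG : BishopGromov ν K N)
    (hε : 0 < ε)
    (n : ℕ) (p : Fin n → X)
    (hdisj : ∀ i j : Fin n, i ≠ j →
      Disjoint (ball (p i) (ε / 2)) (ball (p j) (ε / 2)))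
    (x : X) :
    (Nat.card {j : Fin n // (ball x ε ∩ ball (p j) ε).Nonempty} : ℝ) *
        ∫ t in (0:ℝ)..(ε / 2), SKN K N t ≤
      ∫ t in (0:ℝ)..(9 * ε / 2), SKN K N t := by
  classical
  have : IsFiniteMeasure ν := ⟨hνfin⟩
  set s := univ.filter fun j => (ball x ε ∩ ball (p j) ε).Nonempty
  have hcard : Nat.card {j : Fin n // (ball x ε ∩ ball (p j) ε).Nonempty} = #s := by
    rw [Nat.card_eq_fintype_card, Fintype.card_subtype]
  have hclose : ∀ j ∈ s, dist x (p j) < 2 * ε := fun j hj => by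
    linarith [dist_lt_add_of_nonempty_ball_inter_ball (mem_filter.mp hj).2]
  have hcount := card_mul_le_of_pairwiseDisjoint (μ := ν) (A := fun j => ball (p j) (ε / 2))
    (B := ball x (5 * ε / 2))
    (fun _ _ => measurableSet_ball) (fun i _ j _ hij => hdisj i j hij)
    (fun j hj => ball_subset_ball' (by linarith [dist_comm x (p j), hclose j hj]))
    (hsupp x _ (by positivity)).ne' (measure_ne_top _ _)
    fun j hj => hBG.measure_mul_le (R := 9 * ε / 2) (by positivity) (by linarith)
      (ball_subset_ball' (by linarith [hclose j hj]))
  rwa [← ENNReal.ofReal_natCast, ← ENNReal.ofReal_mul (by positivity),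
    ENNReal.ofReal_le_ofReal_iff (integral_SKN_nonneg_s1 hK (by positivity)), ← hcard] at hcount

theorem stmt1 {X : Type*} [MetricSpace X] [MeasurableSpace X] [BorelSpace X]
    (ν : Measure X) (K N D ε : ℝ) (hN : 1 < N)
    (hν0 : 0 < ν Set.univ) (hνfin : ν Set.univ < ⊤)
    (hsupp : ∀ (x : X) (r : ℝ), 0 < r → 0 < ν (ball x r))
    (hdiam : EMetric.diam (Set.univ : Set X) < ENNReal.ofReal D)
    (hK : 0 < K → 9 * ε / 2 ≤ Real.pi * Real.sqrt ((N - 1) / K))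
    (hBG : BishopGromov ν K N)
    (hε : 0 < ε)
    (n : ℕ) (p : Fin n → X)
    (hdisj : ∀ i j : Fin n, i ≠ j →
      Disjoint (ball (p i) (ε / 2)) (ball (p j) (ε / 2)))
    (x : X) :
    (Nat.card {j : Fin n // (ball x ε ∩ ball (p j) ε).Nonempty} : ℝ) *
        ∫ t in (0:ℝ)..(ε / 2), SKN K N t ≤
      ∫ t in (0:ℝ)..(9 * ε / 2), SKN K N t :=
  stmt1_general ν K N ε hνfin hsupp hK hBG hε n p hdisj x
end

section
/- For every K ≥ 1 there exists s₀ = s₀(K) > 0 such that for every set X, every K-quasimetric q on X, and every 0 < s ≤ s₀, there exist a constant C = C(s,K) ≥ 1 and a metric d_s on X satisfying (1/C) · q(x,y)^s ≤ d_s(x,y) ≤ C · q(x,y)^s for all x, y ∈ X. -/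
/-- A `K`-quasimetric on a set `X`. -/
def IsQuasimetric {X : Type*} (K : ℝ) (q : X → X → ℝ) : Prop :=
  (∀ x y, 0 ≤ q x y) ∧ (∀ x y, q x y = 0 ↔ x = y) ∧ (∀ x y, q x y = q y x) ∧
    ∀ x y z, q x y ≤ K * (q x z + q z y)

/-- A metric, given as a distance function. -/
def IsMetricFun {X : Type*} (d : X → X → ℝ) : Prop :=
  (∀ x y, 0 ≤ d x y) ∧ (∀ x y, d x y = 0 ↔ x = y) ∧ (∀ x y, d x y = d y x) ∧
    ∀ x y z, d x y ≤ d x z + d z y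

/-!
Applying the quasi-triangle inequality twice gives `q x₁ x₄ ≤ 3K² max (q x₁ x₂, q x₂ x₃, q x₃ x₄)`,
so for `s ≤ log_{3K²} 2` the power `ρ = q ^ s` satisfies the same inequality with constant `2`.
By Frink's chain lemma (`PseudoMetricSpace.le_two_mul_dist_ofPreNNDist`), the largest metric below
`ρ`, the infimum of `ρ`-lengths of chains, is then at least `ρ / 2`.
-/

open Real

theorem exists_isMetricFun_of_le_two_mul_max {X : Type*} (ρ : X → X → ℝ)
    (hρ_nonneg : ∀ x y, 0 ≤ ρ x y) (hρ_eq_zero : ∀ x y, ρ x y = 0 ↔ x = y)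
    (hρ_comm : ∀ x y, ρ x y = ρ y x)
    (hρ_quad : ∀ x₁ x₂ x₃ x₄, ρ x₁ x₄ ≤ 2 * max (ρ x₁ x₂) (max (ρ x₂ x₃) (ρ x₃ x₄))) :
    ∃ d : X → X → ℝ, IsMetricFun d ∧ ∀ x y, d x y ≤ ρ x y ∧ ρ x y ≤ 2 * d x y := by
  let ρ' : X → X → NNReal := fun x y => ⟨ρ x y, hρ_nonneg x y⟩
  have hself : ∀ x, ρ' x x = 0 := fun x => NNReal.coe_eq_zero.1 ((hρ_eq_zero x x).2 rfl)
  have hcomm : ∀ x y, ρ' x y = ρ' y x := fun x y => NNReal.coe_inj.1 (hρ_comm x y)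
  have hquad : ∀ x₁ x₂ x₃ x₄, ρ' x₁ x₄ ≤ 2 * max (ρ' x₁ x₂) (max (ρ' x₂ x₃) (ρ' x₃ x₄)) :=
    fun x₁ x₂ x₃ x₄ => by
      rw [← NNReal.coe_le_coe]
      push_cast
      exact hρ_quad x₁ x₂ x₃ x₄
  let _ := PseudoMetricSpace.ofPreNNDist ρ' hself hcomm
  have hle : ∀ x y, dist x y ≤ ρ x y := PseudoMetricSpace.dist_ofPreNNDist_le ρ' hself hcomm
  have hge : ∀ x y, ρ x y ≤ 2 * dist x y :=
    PseudoMetricSpace.le_two_mul_dist_ofPreNNDist ρ' hself hcomm hquad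
  refine ⟨dist, ⟨fun _ _ => dist_nonneg, fun x y => ⟨fun h => ?_, fun h => h ▸ dist_self x⟩,
    dist_comm, fun x y z => dist_triangle x z y⟩, fun x y => ⟨hle x y, hge x y⟩⟩
  refine (hρ_eq_zero x y).1 (le_antisymm ?_ (hρ_nonneg x y))
  simpa [h] using hge x y

namespace IsQuasimetric

variable {X : Type*} {K : ℝ} {q : X → X → ℝ}

theorem le_three_mul_sq_mul_max (hq : IsQuasimetric K q) (hK : 1 ≤ K) (x₁ x₂ x₃ x₄ : X) :
    q x₁ x₄ ≤ 3 * K ^ 2 * max (q x₁ x₂) (max (q x₂ x₃) (q x₃ x₄)) := by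
  obtain ⟨hq_nonneg, -, -, hq_tri⟩ := hq
  set M := max (q x₁ x₂) (max (q x₂ x₃) (q x₃ x₄))
  have hM₁ : q x₁ x₂ ≤ M := le_max_left _ _
  have hM₂ : q x₂ x₃ ≤ M := (le_max_left _ _).trans (le_max_right _ _)
  have hM₃ : q x₃ x₄ ≤ M := (le_max_right _ _).trans (le_max_right _ _)
  have hM : 0 ≤ M := (hq_nonneg x₁ x₂).trans hM₁
  have hK₀ : 0 ≤ K := by linarith
  calc q x₁ x₄ ≤ K * (q x₁ x₂ + q x₂ x₄) := hq_tri x₁ x₄ x₂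
    _ ≤ K * (q x₁ x₂ + K * (q x₂ x₃ + q x₃ x₄)) := by gcongr; exact hq_tri x₂ x₄ x₃
    _ ≤ K * (M + K * (M + M)) := by gcongr
    _ = K * M + 2 * K ^ 2 * M := by ring
    _ ≤ 3 * K ^ 2 * M := by nlinarith [mul_nonneg (mul_nonneg hK₀ hM) (sub_nonneg.2 hK)]

theorem rpow_le_two_mul_max (hq : IsQuasimetric K q) (hK : 1 ≤ K) {s : ℝ} (hs : 0 ≤ s)
    (hKs : (3 * K ^ 2) ^ s ≤ 2) (x₁ x₂ x₃ x₄ : X) :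
    q x₁ x₄ ^ s ≤ 2 * max (q x₁ x₂ ^ s) (max (q x₂ x₃ ^ s) (q x₃ x₄ ^ s)) := by
  have hq_nonneg := hq.1
  have hM : 0 ≤ max (q x₂ x₃) (q x₃ x₄) := (hq_nonneg x₂ x₃).trans (le_max_left _ _)
  rw [← rpow_max (hq_nonneg _ _) (hq_nonneg _ _) hs,
    ← rpow_max (hq_nonneg _ _) hM hs]
  calc q x₁ x₄ ^ s ≤ (3 * K ^ 2 * max (q x₁ x₂) (max (q x₂ x₃) (q x₃ x₄))) ^ s := by
        gcongr
        · exact hq_nonneg _ _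
        · exact hq.le_three_mul_sq_mul_max hK x₁ x₂ x₃ x₄
    _ = (3 * K ^ 2) ^ s * max (q x₁ x₂) (max (q x₂ x₃) (q x₃ x₄)) ^ s :=
        mul_rpow (by positivity) ((hq_nonneg x₁ x₂).trans (le_max_left _ _))
    _ ≤ 2 * max (q x₁ x₂) (max (q x₂ x₃) (q x₃ x₄)) ^ s := by gcongr

theorem rpow_eq_zero_iff (hq : IsQuasimetric K q) {s : ℝ} (hs : s ≠ 0) (x y : X) :
    q x y ^ s = 0 ↔ x = y := by
  rw [rpow_eq_zero_iff_of_nonneg (hq.1 x y), hq.2.1]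
  exact and_iff_left hs

end IsQuasimetric

theorem stmt5 (K : ℝ) (hK : 1 ≤ K) :
    ∃ s₀ : ℝ, 0 < s₀ ∧
      ∀ (X : Type) (q : X → X → ℝ), IsQuasimetric K q →
        ∀ s : ℝ, 0 < s → s ≤ s₀ →
          ∃ C : ℝ, 1 ≤ C ∧ ∃ d : X → X → ℝ, IsMetricFun d ∧
            ∀ x y : X, (1 / C) * q x y ^ s ≤ d x y ∧ d x y ≤ C * q x y ^ s := by
  have h3K : 1 < 3 * K ^ 2 := by nlinarith
  refine ⟨logb (3 * K ^ 2) 2, logb_pos h3K one_lt_two, fun X q hq s hs hss => ?_⟩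
  have hKs : (3 * K ^ 2) ^ s ≤ 2 :=
    calc (3 * K ^ 2) ^ s ≤ (3 * K ^ 2) ^ logb (3 * K ^ 2) 2 :=
          rpow_le_rpow_of_exponent_le h3K.le hss
      _ = 2 := rpow_logb (by positivity) h3K.ne' two_pos
  obtain ⟨d, hd, hdq⟩ := exists_isMetricFun_of_le_two_mul_max (fun x y => q x y ^ s)
    (fun x y => rpow_nonneg (hq.1 x y) s) (hq.rpow_eq_zero_iff hs.ne')
    (fun x y => by rw [hq.2.2.1]) (hq.rpow_le_two_mul_max hK hs.le hKs)
  refine ⟨2, one_le_two, d, hd, fun x y => ⟨?_, ?_⟩⟩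
  · linarith [(hdq x y).2]
  · linarith [(hdq x y).1, rpow_nonneg (hq.1 x y) s]
end

section
/- Let q be a K-quasimetric on a set X, with K ≥ 1, and let s > 0 satisfy (2K)^{2s} ≤ 2. Then there exists a metric d_s on X such that (2K)^{−2s} · q(x,y)^s ≤ d_s(x,y) ≤ (2K)^{2s} · q(x,y)^s for all x, y ∈ X; that is, q^s is bilipschitz equivalent to a metric with bilipschitz constant C = (2K)^{2s}. -/
/-
Raising the quasi-triangle inequality to the power `s` gives
`q^s x y ≤ A * max (q^s x z) (q^s z y)` with `A = (2K)^s`, and applying it twice a four-point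
inequality with constant `A^2 = (2K)^(2s) ≤ 2`. Take for `d` the chain metric
`d x y = inf Σ q^s xᵢ xᵢ₊₁` over all chains `x = x₀, …, xₙ = y`, which is at most `q^s`.
Conversely, cut a chain of total length `L` at an edge such that the parts before and after it
both have length at most `L / 2`; by induction on the number of edges their endpoints are at
`q^s`-distance at most `A^2 L / 2 ≤ L`, as are those of the middle edge, so the four-point
inequality gives `q^s x y ≤ A^2 L`.
-/

open Finset
open scoped NNReal

theorem exists_balanced_split_Ico {f : ℕ → ℝ} (hf : ∀ i, 0 ≤ f i) {a b : ℕ} (hab : a < b) :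
    ∃ m, a ≤ m ∧ m < b ∧ 2 * ∑ i ∈ Ico a m, f i ≤ ∑ i ∈ Ico a b, f i ∧
      2 * ∑ i ∈ Ico (m + 1) b, f i ≤ ∑ i ∈ Ico a b, f i := by
  classical
  set S := ∑ i ∈ Ico a b, f i
  let P : ℕ → Prop := fun k => 2 * ∑ i ∈ Ico a k, f i ≤ S
  have hS : 0 ≤ S := sum_nonneg fun i _ => hf i
  have hPa : P a := by simpa [P] using hS
  set m := Nat.findGreatest P (b - 1)
  have ham : a ≤ m := Nat.le_findGreatest (by omega) hPa
  have hmb : m < b := by have := Nat.findGreatest_le (P := P) (b - 1); omega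
  refine ⟨m, ham, hmb, Nat.findGreatest_spec (by omega) hPa, ?_⟩
  have hsplit : ∑ i ∈ Ico a (m + 1), f i + ∑ i ∈ Ico (m + 1) b, f i = S :=
    sum_Ico_consecutive f (by omega) hmb
  rcases (Nat.succ_le_of_lt hmb).eq_or_lt with hm | hm
  · simpa [← hm] using hS
  · have := Nat.findGreatest_is_greatest (Nat.lt_succ_self m) (by omega : m + 1 ≤ b - 1)
    simp only [P, not_le] at this
    linarith

theorem List.sum_zipWith_cons_append_singleton {X M : Type*} [AddCommMonoid M]
    (f : X → X → M) (x y : X) (l : List X) :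
    ((x :: l).zipWith f (l ++ [y])).sum =
      ∑ i ∈ Finset.range (l.length + 1),
        f ((x :: l ++ [y]).getD i y) ((x :: l ++ [y]).getD (i + 1) y) := by
  induction l generalizing x with
  | nil => simp
  | cons z l ih => rw [Finset.sum_range_succ', List.length_cons]; simp [ih, add_comm (f x z)]

section FourPoint

variable {X : Type*}

theorem le_sq_mul_max_max_of_le_mul_max {ρ : X → X → ℝ} {A : ℝ} (hρ0 : ∀ x y, 0 ≤ ρ x y)
    (hA : 1 ≤ A) (hρ : ∀ x y z, ρ x y ≤ A * max (ρ x z) (ρ z y)) (x₁ x₂ x₃ x₄ : X) :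
    ρ x₁ x₄ ≤ A ^ 2 * max (ρ x₁ x₂) (max (ρ x₂ x₃) (ρ x₃ x₄)) := by
  have h₁₂ : ρ x₁ x₂ ≤ A * ρ x₁ x₂ := le_mul_of_one_le_left (hρ0 _ _) hA
  calc ρ x₁ x₄ ≤ A * max (ρ x₁ x₂) (A * max (ρ x₂ x₃) (ρ x₃ x₄)) := by
        grw [hρ x₁ x₄ x₂, hρ x₂ x₄ x₃]
    _ ≤ A * (A * max (ρ x₁ x₂) (max (ρ x₂ x₃) (ρ x₃ x₄))) := by
        grw [h₁₂, ← mul_max_of_nonneg _ _ (by linarith)]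
    _ = A ^ 2 * max (ρ x₁ x₂) (max (ρ x₂ x₃) (ρ x₃ x₄)) := by ring

theorem IsQuasimetric.rpow_le_mul_max {K : ℝ} {q : X → X → ℝ} (hq : IsQuasimetric K q)
    (hK : 0 ≤ K) {s : ℝ} (hs : 0 ≤ s) (x y z : X) :
    q x y ^ s ≤ (2 * K) ^ s * max (q x z ^ s) (q z y ^ s) := by
  obtain ⟨hq0, -, -, hq_tri⟩ := hq
  have hmax : q x y ≤ 2 * K * max (q x z) (q z y) := by
    grw [hq_tri x y z, add_le_add (le_max_left (q x z) (q z y)) (le_max_right (q x z) (q z y))]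
    linarith
  grw [hmax]
  · rw [Real.mul_rpow (by positivity) (le_max_of_le_left (hq0 x z)),
      Real.rpow_max (hq0 x z) (hq0 z y) hs]
  · exact hq0 x y

theorem le_mul_sum_Ico_of_four_point {ρ : X → X → ℝ} {C : ℝ} (hρ0 : ∀ x y, 0 ≤ ρ x y)
    (hρ_self : ∀ x, ρ x x = 0) (hC0 : 0 ≤ C) (hC : C ≤ 2)
    (hρ : ∀ x₁ x₂ x₃ x₄, ρ x₁ x₄ ≤ C * max (ρ x₁ x₂) (max (ρ x₂ x₃) (ρ x₃ x₄)))
    (p : ℕ → X) {a b : ℕ} (hab : a ≤ b) :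
    ρ (p a) (p b) ≤ C * ∑ i ∈ Ico a b, ρ (p i) (p (i + 1)) := by
  induction h : b - a using Nat.strong_induction_on generalizing a b with
  | _ n ih =>
  rcases hab.eq_or_lt with rfl | hab
  · simp [hρ_self]
  set S := ∑ i ∈ Ico a b, ρ (p i) (p (i + 1))
  obtain ⟨m, ham, hmb, hpre, hsuf⟩ :=
    exists_balanced_split_Ico (fun i => hρ0 (p i) (p (i + 1))) hab
  have hhalf : ∀ s : Finset ℕ, 2 * ∑ i ∈ s, ρ (p i) (p (i + 1)) ≤ S →
      C * ∑ i ∈ s, ρ (p i) (p (i + 1)) ≤ S := fun s hs => by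
    have := sum_nonneg fun i (_ : i ∈ s) => hρ0 (p i) (p (i + 1))
    nlinarith
  have hleft : ρ (p a) (p m) ≤ S := (ih (m - a) (by omega) ham rfl).trans (hhalf _ hpre)
  have hmid : ρ (p m) (p (m + 1)) ≤ S :=
    single_le_sum (f := fun i => ρ (p i) (p (i + 1))) (fun i _ => hρ0 _ _) (mem_Ico.2 ⟨ham, hmb⟩)
  have hright : ρ (p (m + 1)) (p b) ≤ S :=
    (ih (b - (m + 1)) (by omega) hmb rfl).trans (hhalf _ hsuf)
  calc ρ (p a) (p b)
      ≤ C * max (ρ (p a) (p m)) (max (ρ (p m) (p (m + 1))) (ρ (p (m + 1)) (p b))) := hρ _ _ _ _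
    _ ≤ C * S := by gcongr; exact max_le hleft (max_le hmid hright)

/-- Mathlib's `PseudoMetricSpace.le_two_mul_dist_ofPreNNDist` is the case `C = 2`. -/
theorem PseudoMetricSpace.le_mul_dist_ofPreNNDist (d : X → X → ℝ≥0)
    (dist_self : ∀ x, d x x = 0) (dist_comm : ∀ x y, d x y = d y x) {C : ℝ} (hC0 : 0 ≤ C)
    (hC : C ≤ 2)
    (hd : ∀ x₁ x₂ x₃ x₄, (d x₁ x₄ : ℝ) ≤ C * max (d x₁ x₂ : ℝ) (max (d x₂ x₃ : ℝ) (d x₃ x₄)))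
    (x y : X) :
    d x y ≤ C * @dist X
      (@PseudoMetricSpace.toDist X (PseudoMetricSpace.ofPreNNDist d dist_self dist_comm)) x y := by
  rw [dist_ofPreNNDist, NNReal.coe_iInf, Real.mul_iInf_of_nonneg hC0]
  refine le_ciInf fun l => ?_
  have := le_mul_sum_Ico_of_four_point (ρ := fun x y => (d x y : ℝ))
    (fun _ _ => NNReal.coe_nonneg _) (fun x => by simp [dist_self]) hC0 hC hd
    (fun i => (x :: l ++ [y]).getD i y) (Nat.zero_le (l.length + 1))
  simpa [List.sum_zipWith_cons_append_singleton, ← range_eq_Ico] using this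

theorem exists_isMetricFun_of_four_point {ρ : X → X → ℝ} {C : ℝ} (hρ0 : ∀ x y, 0 ≤ ρ x y)
    (hρ_zero : ∀ x y, ρ x y = 0 ↔ x = y) (hρ_comm : ∀ x y, ρ x y = ρ y x)
    (hC0 : 0 ≤ C) (hC : C ≤ 2)
    (hρ : ∀ x₁ x₂ x₃ x₄, ρ x₁ x₄ ≤ C * max (ρ x₁ x₂) (max (ρ x₂ x₃) (ρ x₃ x₄))) :
    ∃ d : X → X → ℝ, IsMetricFun d ∧ ∀ x y, ρ x y ≤ C * d x y ∧ d x y ≤ ρ x y := by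
  let ρ' : X → X → ℝ≥0 := fun x y => (ρ x y).toNNReal
  have hρ' : ∀ x y, (ρ' x y : ℝ) = ρ x y := fun x y => Real.coe_toNNReal _ (hρ0 x y)
  have hρ'_self : ∀ x, ρ' x x = 0 := fun x => by simp [ρ', (hρ_zero x x).2 rfl]
  have hρ'_comm : ∀ x y, ρ' x y = ρ' y x := fun x y => by simp only [ρ', hρ_comm x y]
  let := PseudoMetricSpace.ofPreNNDist ρ' hρ'_self hρ'_comm
  have hlower : ∀ x y, ρ x y ≤ C * dist x y := fun x y => hρ' x y ▸
    PseudoMetricSpace.le_mul_dist_ofPreNNDist ρ' _ _ hC0 hC (by simpa only [hρ'] using hρ) x y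
  refine ⟨dist, ⟨fun _ _ => dist_nonneg, fun x y => ⟨fun h => ?_, fun h => h ▸ dist_self x⟩,
    dist_comm, fun x y z => dist_triangle x z y⟩,
    fun x y => ⟨hlower x y, hρ' x y ▸ PseudoMetricSpace.dist_ofPreNNDist_le ρ' _ _ x y⟩⟩
  have := hlower x y
  rw [h, mul_zero] at this
  exact (hρ_zero x y).1 (this.antisymm (hρ0 x y))

end FourPoint

theorem stmt6 {X : Type*} (K : ℝ) (hK : 1 ≤ K) (q : X → X → ℝ)
    (hq : IsQuasimetric K q) (s : ℝ) (hs : 0 < s)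
    (hKs : (2 * K) ^ (2 * s) ≤ 2) :
    ∃ d : X → X → ℝ, IsMetricFun d ∧
      ∀ x y : X, (2 * K) ^ (-(2 * s)) * q x y ^ s ≤ d x y ∧
        d x y ≤ (2 * K) ^ (2 * s) * q x y ^ s := by
  have hq0 : ∀ x y, 0 ≤ q x y ^ s := fun x y => Real.rpow_nonneg (hq.1 x y) s
  have hA : 1 ≤ (2 * K) ^ s := Real.one_le_rpow (by linarith) hs.le
  have hC : (2 * K) ^ (2 * s) = ((2 * K) ^ s) ^ 2 := by
    rw [mul_comm 2 s, Real.rpow_mul (by linarith), Real.rpow_two]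
  obtain ⟨d, hd, hbounds⟩ := exists_isMetricFun_of_four_point hq0
    (fun x y => (Real.rpow_eq_zero (hq.1 x y) hs.ne').trans (hq.2.1 x y))
    (fun x y => by rw [hq.2.2.1 x y]) (by positivity) hKs
    (hC ▸ le_sq_mul_max_max_of_le_mul_max hq0 hA (hq.rpow_le_mul_max (by linarith) hs.le))
  refine ⟨d, hd, fun x y => ⟨?_, ?_⟩⟩
  · rw [Real.rpow_neg (by linarith), inv_mul_le_iff₀ (by positivity)]
    exact (hbounds x y).1
  · exact (hbounds x y).2.trans (le_mul_of_one_le_left (hq0 x y) (hC ▸ one_le_pow₀ hA))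
end

section
/- Let (X,d,μ) be a metric measure space that is Ahlfors α-regular with constant C₀ ≥ 1, where α > 0, and let s = 1/α. Then for all x, y ∈ X one has C₀^{−s} · d(x,y) ≤ q_{μ,s}(x,y) ≤ (2C₀)^s · d(x,y); in particular the quasimetric q_{μ,s} is bilipschitz equivalent to the original metric d. -/
open MeasureTheory Metric

/-- `(X,d,μ)` is Ahlfors `α`-regular with constant `C₀`:
`(1/C₀)·R^α ≤ μ(B[x,R]) ≤ C₀·R^α` for all `x` and all `0 < R ≤ diam X`. -/
def AhlforsRegular {X : Type*} [MetricSpace X] [MeasurableSpace X]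
    (μ : Measure X) (α C₀ : ℝ) : Prop :=
  ∀ (x : X) (R : ℝ), 0 < R → ENNReal.ofReal R ≤ EMetric.diam (Set.univ : Set X) →
    ENNReal.ofReal (R ^ α / C₀) ≤ μ (closedBall x R) ∧
      μ (closedBall x R) ≤ ENNReal.ofReal (C₀ * R ^ α)

open Classical in
/-- The quasimetric `q_{μ,s}` associated to a metric measure space. -/
noncomputable def qms {X : Type*} [MetricSpace X] [MeasurableSpace X]
    (μ : Measure X) (s : ℝ) (x y : X) : ℝ :=
  if x = y then 0
  else ((μ (closedBall x (dist x y)) + μ (closedBall y (dist x y))).toReal) ^ s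

/-!
For `x ≠ y` the radius `d(x,y)` is at most `diam X`, so Ahlfors regularity pins the total mass of
the two balls between `d(x,y)^α / C₀` and `2 C₀ d(x,y)^α`; taking `1/α`-th powers gives the bounds.
-/

lemma Real.mul_rpow_rpow_inv {a R α : ℝ} (ha : 0 ≤ a) (hR : 0 ≤ R) (hα : α ≠ 0) :
    (a * R ^ α) ^ α⁻¹ = a ^ α⁻¹ * R := by
  rw [Real.mul_rpow ha (by positivity), Real.rpow_rpow_inv hR hα]

lemma Real.rpow_neg_inv_mul_le_rpow_inv {C R α t : ℝ} (hC : 0 < C) (hR : 0 ≤ R) (hα : 0 < α)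
    (h : R ^ α / C ≤ t) : C ^ (-α⁻¹) * R ≤ t ^ α⁻¹ := calc
  C ^ (-α⁻¹) * R = (C⁻¹ * R ^ α) ^ α⁻¹ := by
    rw [Real.mul_rpow_rpow_inv (inv_nonneg.mpr hC.le) hR hα.ne', Real.inv_rpow hC.le,
      Real.rpow_neg hC.le]
  _ ≤ t ^ α⁻¹ := by
    rw [inv_mul_eq_div]
    exact Real.rpow_le_rpow (by positivity) h (inv_nonneg.mpr hα.le)

lemma Real.rpow_inv_le_mul_of_le_mul_rpow {c R α t : ℝ} (hc : 0 ≤ c) (hR : 0 ≤ R) (hα : 0 < α)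
    (ht : 0 ≤ t) (h : t ≤ c * R ^ α) : t ^ α⁻¹ ≤ c ^ α⁻¹ * R := calc
  t ^ α⁻¹ ≤ (c * R ^ α) ^ α⁻¹ := Real.rpow_le_rpow ht h (inv_nonneg.mpr hα.le)
  _ = c ^ α⁻¹ * R := Real.mul_rpow_rpow_inv hc hR hα.ne'

section

variable {X : Type*} [MetricSpace X] [MeasurableSpace X] {μ : Measure X} {α C₀ : ℝ} {x y : X}

lemma qms_of_ne (s : ℝ) (hxy : x ≠ y) :
    qms μ s x y = (μ (closedBall x (dist x y)) + μ (closedBall y (dist x y))).toReal ^ s :=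
  if_neg hxy

lemma AhlforsRegular.measure_closedBall_dist (hreg : AhlforsRegular μ α C₀) (hxy : x ≠ y)
    (z : X) :
    ENNReal.ofReal (dist x y ^ α / C₀) ≤ μ (closedBall z (dist x y)) ∧
      μ (closedBall z (dist x y)) ≤ ENNReal.ofReal (C₀ * dist x y ^ α) :=
  hreg z _ (dist_pos.mpr hxy) <| by
    rw [← edist_dist]
    exact edist_le_ediam_of_mem (Set.mem_univ x) (Set.mem_univ y)

lemma AhlforsRegular.toReal_measure_closedBall_add_mem_Icc (hreg : AhlforsRegular μ α C₀)
    (hC₀ : 0 ≤ C₀) (hxy : x ≠ y) :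
    (μ (closedBall x (dist x y)) + μ (closedBall y (dist x y))).toReal ∈
      Set.Icc (dist x y ^ α / C₀) (2 * C₀ * dist x y ^ α) := by
  obtain ⟨hx_low, hx_up⟩ := hreg.measure_closedBall_dist hxy x
  obtain ⟨-, hy_up⟩ := hreg.measure_closedBall_dist hxy y
  have hsum_up : μ (closedBall x (dist x y)) + μ (closedBall y (dist x y)) ≤
      ENNReal.ofReal (2 * C₀ * dist x y ^ α) := calc
    _ ≤ ENNReal.ofReal (C₀ * dist x y ^ α) + ENNReal.ofReal (C₀ * dist x y ^ α) :=
      add_le_add hx_up hy_up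
    _ = ENNReal.ofReal (2 * C₀ * dist x y ^ α) := by
      rw [← ENNReal.ofReal_add (by positivity) (by positivity)]
      ring_nf
  refine ⟨?_, ENNReal.toReal_le_of_le_ofReal (by positivity) hsum_up⟩
  exact (ENNReal.ofReal_le_iff_le_toReal (ne_top_of_le_ne_top ENNReal.ofReal_ne_top hsum_up)).mp
    (hx_low.trans le_self_add)

end

theorem stmt7_general {X : Type*} [MetricSpace X] [MeasurableSpace X]
    (μ : Measure X) (α C₀ : ℝ) (hα : 0 < α) (hC₀ : 1 ≤ C₀)
    (hreg : AhlforsRegular μ α C₀) :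
    ∀ x y : X,
      C₀ ^ (-(1 / α)) * dist x y ≤ qms μ (1 / α) x y ∧
        qms μ (1 / α) x y ≤ (2 * C₀) ^ (1 / α) * dist x y := by
  intro x y
  rcases eq_or_ne x y with rfl | hxy
  · simp [qms]
  have hC₀_pos : 0 < C₀ := zero_lt_one.trans_le hC₀
  obtain ⟨h_low, h_up⟩ := hreg.toReal_measure_closedBall_add_mem_Icc hC₀_pos.le hxy
  rw [qms_of_ne _ hxy, one_div]
  exact ⟨Real.rpow_neg_inv_mul_le_rpow_inv hC₀_pos dist_nonneg hα h_low,
    Real.rpow_inv_le_mul_of_le_mul_rpow (by positivity) dist_nonneg hα ENNReal.toReal_nonneg h_up⟩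

theorem stmt7 {X : Type*} [MetricSpace X] [MeasurableSpace X] [BorelSpace X]
    (μ : Measure X) (α C₀ : ℝ) (hα : 0 < α) (hC₀ : 1 ≤ C₀)
    (hreg : AhlforsRegular μ α C₀) :
    ∀ x y : X,
      C₀ ^ (-(1 / α)) * dist x y ≤ qms μ (1 / α) x y ∧
        qms μ (1 / α) x y ≤ (2 * C₀) ^ (1 / α) * dist x y :=
  stmt7_general μ α C₀ hα hC₀ hreg
end

section
/- Let (X,d) be a metric space containing at least two points that is uniformly perfect with constant C ≥ 1, and let μ be a doubling measure on X with constant D ≥ 1. Then there exist constants a ∈ (0,1) and θ ∈ (0,1) such that for every x ∈ X, every r with 0 < r ≤ diam X, and every k ∈ ℕ, one has μ(B[x, a^k·r]) ≤ θ^k · μ(B[x,r]). -/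
open MeasureTheory Metric

/-- `(X,d)` is uniformly perfect with constant `C`. -/
def UniformlyPerfect (X : Type*) [MetricSpace X] (C : ℝ) : Prop :=
  ∀ (x : X) (r : ℝ), 0 < r → ENNReal.ofReal r ≤ EMetric.diam (Set.univ : Set X) →
    ∃ y : X, r / C ≤ dist x y ∧ dist x y ≤ r

/-- `μ` is a doubling measure with constant `D` on the metric space `X`. -/
def IsDoublingMeasure {X : Type*} [MetricSpace X] [MeasurableSpace X]
    (μ : Measure X) (D : ℝ) : Prop :=
  (∀ (x : X) (r : ℝ), 0 < r → 0 < μ (closedBall x r) ∧ μ (closedBall x r) < ⊤) ∧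
    ∀ (x : X) (r : ℝ), 0 < r →
      μ (closedBall x (2 * r)) ≤ ENNReal.ofReal D * μ (closedBall x r)

/-! If `y` lies at distance comparable to `s` from `x` (uniform perfectness), the small ball
`B[y, s/(8C)]` sits inside `B[x, s]` away from `B[x, s/(4C)]`, and by doubling it carries a fixed
fraction `D⁻ᵐ` of the mass of `B[x, s]`. Hence shrinking a ball by the factor `4C` loses at least
that fraction of its mass; iterating gives geometric decay. -/

open scoped ENNReal

theorem MeasureTheory.measure_le_one_sub_mul_of_disjoint {α : Type*} [MeasurableSpace α]
    {μ : Measure α} {A B T : Set α} (hAB : Disjoint A B) (hAT : A ⊆ T) (hBT : B ⊆ T)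
    (hB : MeasurableSet B) (hT : μ T ≠ ∞) {ε : ℝ≥0∞} (hε : ε * μ T ≤ μ B) :
    μ A ≤ (1 - ε) * μ T := by
  have hAB_le : μ A + μ B ≤ μ T := by
    rw [← measure_union hAB hB]
    exact measure_mono (Set.union_subset hAT hBT)
  calc μ A ≤ μ T - μ B :=
        ENNReal.le_sub_of_add_le_right (ne_top_of_le_ne_top hT (measure_mono hBT)) hAB_le
    _ ≤ μ T - ε * μ T := tsub_le_tsub_left hε _
    _ = (1 - ε) * μ T := by rw [ENNReal.sub_mul fun _ _ ↦ hT, one_mul]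

theorem ENNReal.le_ofReal_pow_mul_of_forall_le_ofReal_mul {f : ℝ → ℝ≥0∞} {a θ : ℝ} {R : ℝ≥0∞}
    (ha₀ : 0 < a) (ha₁ : a ≤ 1) (hθ : 0 ≤ θ)
    (hf : ∀ s, 0 < s → ENNReal.ofReal s ≤ R → f (a * s) ≤ ENNReal.ofReal θ * f s)
    {r : ℝ} (hr : 0 < r) (hrR : ENNReal.ofReal r ≤ R) (k : ℕ) :
    f (a ^ k * r) ≤ ENNReal.ofReal (θ ^ k) * f r := by
  induction k with
  | zero => simp
  | succ k ih =>
    have hak_le : a ^ k * r ≤ r := mul_le_of_le_one_left hr.le (pow_le_one₀ ha₀.le ha₁)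
    calc f (a ^ (k + 1) * r) = f (a * (a ^ k * r)) := by rw [pow_succ', mul_assoc]
      _ ≤ ENNReal.ofReal θ * f (a ^ k * r) :=
        hf _ (by positivity) ((ENNReal.ofReal_le_ofReal hak_le).trans hrR)
      _ ≤ ENNReal.ofReal θ * (ENNReal.ofReal (θ ^ k) * f r) := mul_le_mul_right ih _
      _ = ENNReal.ofReal (θ ^ (k + 1)) * f r := by
        rw [← mul_assoc, ← ENNReal.ofReal_mul hθ, ← pow_succ']

namespace IsDoublingMeasure

variable {X : Type*} [MetricSpace X] [MeasurableSpace X] {μ : Measure X} {D : ℝ}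

theorem mono (hμ : IsDoublingMeasure μ D) {D' : ℝ} (hD : D ≤ D') : IsDoublingMeasure μ D' :=
  ⟨hμ.1, fun x r hr ↦ (hμ.2 x r hr).trans (by gcongr)⟩

theorem measure_closedBall_two_pow_mul_le (hμ : IsDoublingMeasure μ D) (n : ℕ) (x : X) {r : ℝ}
    (hr : 0 < r) : μ (closedBall x (2 ^ n * r)) ≤ ENNReal.ofReal D ^ n * μ (closedBall x r) := by
  induction n with
  | zero => simp
  | succ n ih =>
    calc μ (closedBall x (2 ^ (n + 1) * r)) = μ (closedBall x (2 * (2 ^ n * r))) := by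
          rw [pow_succ', mul_assoc]
      _ ≤ ENNReal.ofReal D * μ (closedBall x (2 ^ n * r)) := hμ.2 x _ (by positivity)
      _ ≤ ENNReal.ofReal D * (ENNReal.ofReal D ^ n * μ (closedBall x r)) := mul_le_mul_right ih _
      _ = ENNReal.ofReal D ^ (n + 1) * μ (closedBall x r) := by ring

theorem measure_closedBall_inv_mul_le [OpensMeasurableSpace X] (hμ : IsDoublingMeasure μ D)
    (hD : 0 < D) {C : ℝ} (hC : 1 ≤ C) (hup : UniformlyPerfect X C) {m : ℕ} (hm : 16 * C ≤ 2 ^ m)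
    (x : X) {s : ℝ} (hs : 0 < s) (hsX : ENNReal.ofReal s ≤ Metric.ediam (Set.univ : Set X)) :
    μ (closedBall x ((4 * C)⁻¹ * s)) ≤
      ENNReal.ofReal (1 - (D ^ m)⁻¹) * μ (closedBall x s) := by
  obtain ⟨y, hy_ge, hy_le⟩ := hup x (s / 2) (by positivity)
    ((ENNReal.ofReal_le_ofReal (by linarith)).trans hsX)
  have hC₀ : 0 < C := by linarith
  have hdisj : Disjoint (closedBall x ((4 * C)⁻¹ * s)) (closedBall y (s / (8 * C))) := by
    refine closedBall_disjoint_closedBall ?_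
    calc (4 * C)⁻¹ * s + s / (8 * C) = 3 * s / (8 * C) := by field_simp; ring
      _ < 4 * s / (8 * C) := by gcongr; linarith
      _ = s / 2 / C := by field_simp; ring
      _ ≤ dist x y := hy_ge
  have hsmall_sub : closedBall y (s / (8 * C)) ⊆ closedBall x s := by
    refine closedBall_subset_closedBall' ?_
    calc s / (8 * C) + dist y x ≤ s / 8 + s / 2 := by
          rw [dist_comm]
          gcongr
          linarith
      _ ≤ s := by linarith
  have hs_sub : closedBall x s ⊆ closedBall y (2 ^ m * (s / (8 * C))) := by
    refine closedBall_subset_closedBall' ?_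
    calc s + dist x y ≤ 2 * s := by linarith
      _ ≤ 2 ^ m * (s / (8 * C)) := by
        rw [mul_div_assoc', le_div_iff₀ (by positivity)]
        nlinarith
  have hmass :
      (ENNReal.ofReal D ^ m)⁻¹ * μ (closedBall x s) ≤ μ (closedBall y (s / (8 * C))) := by
    rw [ENNReal.inv_mul_le_iff (by positivity) (by simp)]
    exact (measure_mono hs_sub).trans (hμ.measure_closedBall_two_pow_mul_le m y (by positivity))
  have hθ : ENNReal.ofReal (1 - (D ^ m)⁻¹) = 1 - (ENNReal.ofReal D ^ m)⁻¹ := by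
    rw [ENNReal.ofReal_sub _ (by positivity), ENNReal.ofReal_one,
      ENNReal.ofReal_inv_of_pos (by positivity), ENNReal.ofReal_pow hD.le]
  rw [hθ]
  have hinner_sub : closedBall x ((4 * C)⁻¹ * s) ⊆ closedBall x s :=
    closedBall_subset_closedBall <|
      mul_le_of_le_one_left hs.le (inv_le_one_of_one_le₀ (by linarith))
  exact measure_le_one_sub_mul_of_disjoint hdisj hinner_sub hsmall_sub measurableSet_closedBall
    (hμ.1 x s hs).2.ne hmass

end IsDoublingMeasure

theorem stmt9_general {X : Type*} [MetricSpace X]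
    [MeasurableSpace X] [BorelSpace X]
    (C : ℝ) (hC : 1 ≤ C) (hup : UniformlyPerfect X C)
    (μ : Measure X) (D : ℝ) (hμ : IsDoublingMeasure μ D) :
    ∃ a : ℝ, a ∈ Set.Ioo (0:ℝ) 1 ∧ ∃ θ : ℝ, θ ∈ Set.Ioo (0:ℝ) 1 ∧
      ∀ (x : X) (r : ℝ), 0 < r → ENNReal.ofReal r ≤ EMetric.diam (Set.univ : Set X) →
        ∀ k : ℕ,
          μ (closedBall x (a ^ k * r)) ≤ ENNReal.ofReal (θ ^ k) * μ (closedBall x r) := by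
  obtain ⟨m, hm⟩ := pow_unbounded_of_one_lt (16 * C) one_lt_two
  have hm₀ : m ≠ 0 := by rintro rfl; norm_num at hm; linarith
  have ha : (4 * C)⁻¹ < 1 := inv_lt_one_of_one_lt₀ (by linarith)
  have hε : (max D 2 ^ m)⁻¹ < 1 := inv_lt_one_of_one_lt₀ (one_lt_pow₀ (by simp) hm₀)
  refine ⟨(4 * C)⁻¹, ⟨by positivity, ha⟩, 1 - (max D 2 ^ m)⁻¹,
    ⟨sub_pos.2 hε, sub_lt_self _ (by positivity)⟩, fun x r hr hrX k ↦ ?_⟩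
  refine ENNReal.le_ofReal_pow_mul_of_forall_le_ofReal_mul (f := fun s ↦ μ (closedBall x s))
    (by positivity) ha.le (sub_nonneg.2 hε.le) (fun s hs hsX ↦ ?_) hr hrX k
  exact (hμ.mono (le_max_left D 2)).measure_closedBall_inv_mul_le (by positivity) hC hup hm.le
    x hs hsX

theorem stmt9 {X : Type*} [MetricSpace X] [Nontrivial X]
    [MeasurableSpace X] [BorelSpace X]
    (C : ℝ) (hC : 1 ≤ C) (hup : UniformlyPerfect X C)
    (μ : Measure X) (D : ℝ) (hD : 1 ≤ D) (hμ : IsDoublingMeasure μ D) :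
    ∃ a : ℝ, a ∈ Set.Ioo (0:ℝ) 1 ∧ ∃ θ : ℝ, θ ∈ Set.Ioo (0:ℝ) 1 ∧
      ∀ (x : X) (r : ℝ), 0 < r → ENNReal.ofReal r ≤ EMetric.diam (Set.univ : Set X) →
        ∀ k : ℕ,
          μ (closedBall x (a ^ k * r)) ≤ ENNReal.ofReal (θ ^ k) * μ (closedBall x r) :=
  stmt9_general C hC hup μ D hμ
end

section
/- Let (X,d) be a metric space containing at least two points that is uniformly perfect with constant C ≥ 1, and let μ be a doubling measure on X with constant D ≥ 1. Then there exists s₀ > 0 such that for every 0 < s ≤ s₀ the canonical injection (X,d) → (X,q_{μ,s}) is quasisymmetric: there exists a homeomorphism η : [0,∞) → [0,∞) such that for all triples of distinct points x, a, b ∈ X, q_{μ,s}(x,a)/q_{μ,s}(x,b) ≤ η(d(x,a)/d(x,b)). -/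
open MeasureTheory Metric

/-!
Doubling gives polynomial growth `μ(B(x, c r)) ≤ D c^(log₂ D) μ(B(x, r))` for `c ≥ 1`. Uniform
perfectness gives the reverse: for `R ≤ diam X` there is a point `y` with
`R/(2C) ≤ d(x, y) ≤ R/2`, so the balls of radius `R/(8C)` about `x` and `y` are disjoint,
lie in `B(x, R)` and have comparable measures; hence `θ μ(B(x, R/(8C))) ≤ μ(B(x, R))` for a
fixed `θ > 1`, and iterating gives polynomial decay `μ(B(x, r)) ≲ (r/R)^A μ(B(x, R))`.
As `q_{μ,s}(x, y)^(1/s)` is comparable to `μ(B(x, d(x, y)))`, the ratio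
`q_{μ,s}(x, a) / q_{μ,s}(x, b)` is at most `(K (t^A + t^B))^s` with `t = d(x, a)/d(x, b)`,
a homeomorphism of `[0, ∞)` for every `s > 0`.
-/

open Set Filter

theorem Real.rpow_logb_comm {b x y : ℝ} (hx : 0 < x) (hy : 0 < y) :
    x ^ Real.logb b y = y ^ Real.logb b x := by
  rw [Real.rpow_def_of_pos hx, Real.rpow_def_of_pos hy, Real.logb, Real.logb]
  ring_nf

theorem le_mul_rpow_logb_of_doubling {f : ℝ → ℝ} {D r c : ℝ} (hD : 1 ≤ D)
    (hmono : MonotoneOn f (Ioi 0)) (hdbl : ∀ ρ, 0 < ρ → f (2 * ρ) ≤ D * f ρ)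
    (hr : 0 < r) (hfr : 0 ≤ f r) (hc : 1 ≤ c) :
    f (c * r) ≤ D * c ^ Real.logb 2 D * f r := by
  have hpow : ∀ k : ℕ, f (2 ^ k * r) ≤ D ^ k * f r := by
    intro k
    induction k with
    | zero => simp
    | succ k ih =>
      calc f (2 ^ (k + 1) * r) = f (2 * (2 ^ k * r)) := by ring_nf
        _ ≤ D * f (2 ^ k * r) := hdbl _ (by positivity)
        _ ≤ D * (D ^ k * f r) := by gcongr
        _ = D ^ (k + 1) * f r := by ring
  set k := ⌈Real.logb 2 c⌉₊
  have hck : c ≤ 2 ^ k := by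
    rw [← Real.rpow_natCast, ← Real.logb_le_iff_le_rpow one_lt_two (by linarith)]
    exact Nat.le_ceil _
  have hDk : D ^ k ≤ D * c ^ Real.logb 2 D :=
    calc D ^ k = D ^ (k : ℝ) := (Real.rpow_natCast D k).symm
      _ ≤ D ^ (Real.logb 2 c + 1) :=
        Real.rpow_le_rpow_of_exponent_le hD
          (Nat.ceil_lt_add_one (Real.logb_nonneg one_lt_two hc)).le
      _ = D * c ^ Real.logb 2 D := by
        rw [Real.rpow_add (by linarith), Real.rpow_one,
          Real.rpow_logb_comm (by linarith) (by linarith), mul_comm]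
  calc f (c * r) ≤ f (2 ^ k * r) :=
        hmono (mem_Ioi.2 (by positivity)) (mem_Ioi.2 (by positivity)) (by gcongr)
    _ ≤ D ^ k * f r := hpow k
    _ ≤ D * c ^ Real.logb 2 D * f r := by gcongr

theorem le_mul_rpow_logb_of_forall_div_le {f : ℝ → ℝ} {L θ R r : ℝ} (hL : 1 < L) (hθ : 1 ≤ θ)
    (hmono : MonotoneOn f (Ioi 0)) (hstep : ∀ ρ, 0 < ρ → ρ ≤ R → θ * f (ρ / L) ≤ f ρ)
    (hr : 0 < r) (hrR : r ≤ R) (hfR : 0 ≤ f R) :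
    f r ≤ θ * (r / R) ^ Real.logb L θ * f R := by
  have hR : 0 < R := hr.trans_le hrR
  have hθ0 : 0 < θ := by linarith
  have hiter : ∀ n : ℕ, f (R / L ^ n) ≤ θ⁻¹ ^ n * f R := by
    intro n
    induction n with
    | zero => simp
    | succ n ih =>
      have hρ : R / L ^ n ≤ R := div_le_self hR.le (one_le_pow₀ hL.le)
      have h := hstep (R / L ^ n) (by positivity) hρ
      rw [pow_succ, ← div_div, pow_succ, mul_comm (θ⁻¹ ^ n), mul_assoc]
      rw [← le_inv_mul_iff₀ hθ0] at h
      exact h.trans (by gcongr)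
  set n := ⌊Real.logb L (R / r)⌋₊
  have hlog : 0 ≤ Real.logb L (R / r) := Real.logb_nonneg hL ((one_le_div hr).2 hrR)
  have hrn : r ≤ R / L ^ n := by
    rw [le_div_iff₀ (by positivity), ← le_div_iff₀' hr, ← Real.rpow_natCast,
      ← Real.le_logb_iff_rpow_le hL (by positivity)]
    exact Nat.floor_le hlog
  have hθn : θ⁻¹ ^ n ≤ θ * (r / R) ^ Real.logb L θ :=
    calc θ⁻¹ ^ n = θ ^ (-(n : ℝ)) := by rw [Real.rpow_neg hθ0.le, Real.rpow_natCast, inv_pow]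
      _ ≤ θ ^ (1 - Real.logb L (R / r)) := by
        apply Real.rpow_le_rpow_of_exponent_le hθ
        linarith [Nat.lt_floor_add_one (Real.logb L (R / r))]
      _ = θ * (r / R) ^ Real.logb L θ := by
        rw [sub_eq_add_neg, Real.rpow_add hθ0, Real.rpow_one, ← Real.logb_inv, inv_div,
          Real.rpow_logb_comm hθ0 (by positivity)]
  calc f r ≤ f (R / L ^ n) := hmono (mem_Ioi.2 hr) (mem_Ioi.2 (hr.trans_le hrn)) hrn
    _ ≤ θ⁻¹ ^ n * f R := hiter n
    _ ≤ θ * (r / R) ^ Real.logb L θ * f R := by gcongr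

theorem exists_homeomorph_Ici_zero {g : ℝ → ℝ} (hcont : ContinuousOn g (Ici 0))
    (hmono : StrictMonoOn g (Ici 0)) (h0 : g 0 = 0) (htop : Tendsto g atTop atTop) :
    ∃ η : Ici (0 : ℝ) ≃ₜ Ici (0 : ℝ), ∀ t (ht : 0 ≤ t), (η ⟨t, ht⟩ : ℝ) = g t := by
  have hmaps (t : Ici (0 : ℝ)) : 0 ≤ g t := by
    simpa only [h0] using hmono.monotoneOn self_mem_Ici t.2 t.2
  let f : Ici (0 : ℝ) → Ici (0 : ℝ) := fun t => ⟨g t, hmaps t⟩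
  have hf : StrictMono f := fun t₁ t₂ h => hmono t₁.2 t₂.2 h
  have hsurj : Function.Surjective f := by
    rintro ⟨y, hy⟩
    obtain ⟨T, hT⟩ := (htop.eventually_ge_atTop y).exists_forall_of_atTop
    obtain ⟨t, ht, hgt⟩ := intermediate_value_Icc (le_max_right T 0)
      (hcont.mono Icc_subset_Ici_self) ⟨h0.symm ▸ hy, hT _ (le_max_left T 0)⟩
    exact ⟨⟨t, ht.1⟩, Subtype.ext hgt⟩
  exact ⟨(hf.orderIsoOfSurjective f hsurj).toHomeomorph, fun t ht => rfl⟩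

theorem exists_homeomorph_Ici_zero_eq_rpow_add_rpow {K A B s : ℝ} (hK : 0 < K) (hA : 0 < A)
    (hB : 0 < B) (hs : 0 < s) :
    ∃ η : Ici (0 : ℝ) ≃ₜ Ici (0 : ℝ), ∀ t (ht : 0 ≤ t),
      (η ⟨t, ht⟩ : ℝ) = (K * (t ^ A + t ^ B)) ^ s := by
  apply exists_homeomorph_Ici_zero
  · refine Continuous.continuousOn ?_
    fun_prop (disch := linarith)
  · intro t₁ (ht₁ : 0 ≤ t₁) t₂ _ h
    have hsum := add_lt_add (Real.rpow_lt_rpow ht₁ h hA) (Real.rpow_lt_rpow ht₁ h hB)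
    exact Real.rpow_lt_rpow (by positivity) (mul_lt_mul_of_pos_left hsum hK) hs
  · simp [hA.ne', hB.ne', hs.ne']
  · exact (tendsto_rpow_atTop hs).comp <|
      ((tendsto_rpow_atTop hA).atTop_add_atTop (tendsto_rpow_atTop hB)).const_mul_atTop hK

section

variable {X : Type*} [MetricSpace X] [MeasurableSpace X] {μ : Measure X} {C D : ℝ}

noncomputable def ballMeasure (μ : Measure X) (x : X) (r : ℝ) : ℝ := (μ (closedBall x r)).toReal

theorem ballMeasure_nonneg (x : X) (r : ℝ) : 0 ≤ ballMeasure μ x r := ENNReal.toReal_nonneg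

namespace IsDoublingMeasure

variable (hμ : IsDoublingMeasure μ D)
include hμ

theorem ballMeasure_pos (x : X) {r : ℝ} (hr : 0 < r) : 0 < ballMeasure μ x r :=
  ENNReal.toReal_pos (hμ.1 x r hr).1.ne' (hμ.1 x r hr).2.ne

theorem ballMeasure_le_of_subset {x y : X} {r R : ℝ} (hR : 0 < R)
    (h : closedBall x r ⊆ closedBall y R) : ballMeasure μ x r ≤ ballMeasure μ y R :=
  ENNReal.toReal_mono (hμ.1 y R hR).2.ne (measure_mono h)

theorem monotoneOn_ballMeasure (x : X) : MonotoneOn (ballMeasure μ x) (Ioi 0) :=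
  fun _ _ _ hR hrR => hμ.ballMeasure_le_of_subset hR (closedBall_subset_closedBall hrR)

theorem ballMeasure_two_mul_le (hD : 0 ≤ D) (x : X) {r : ℝ} (hr : 0 < r) :
    ballMeasure μ x (2 * r) ≤ D * ballMeasure μ x r := by
  have h := ENNReal.toReal_mono (ENNReal.mul_ne_top ENNReal.ofReal_ne_top (hμ.1 x r hr).2.ne)
    (hμ.2 x r hr)
  rwa [ENNReal.toReal_mul, ENNReal.toReal_ofReal hD] at h

theorem ballMeasure_mul_le (hD : 1 ≤ D) (x : X) {r c : ℝ} (hr : 0 < r) (hc : 1 ≤ c) :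
    ballMeasure μ x (c * r) ≤ D * c ^ Real.logb 2 D * ballMeasure μ x r :=
  le_mul_rpow_logb_of_doubling hD (hμ.monotoneOn_ballMeasure x)
    (fun _ => hμ.ballMeasure_two_mul_le (by linarith) x) hr (ballMeasure_nonneg x r) hc

theorem qms_eq {x y : X} (hxy : x ≠ y) (s : ℝ) :
    qms μ s x y = (ballMeasure μ x (dist x y) + ballMeasure μ y (dist x y)) ^ s := by
  have hd := dist_pos.2 hxy
  rw [qms, if_neg hxy, ENNReal.toReal_add (hμ.1 x _ hd).2.ne (hμ.1 y _ hd).2.ne]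
  rfl

theorem ballMeasure_add_ballMeasure_le (hD : 0 ≤ D) {x y : X} (hxy : x ≠ y) :
    ballMeasure μ x (dist x y) + ballMeasure μ y (dist x y) ≤
      (1 + D) * ballMeasure μ x (dist x y) := by
  have hd := dist_pos.2 hxy
  have hy : ballMeasure μ y (dist x y) ≤ D * ballMeasure μ x (dist x y) :=
    calc ballMeasure μ y (dist x y) ≤ ballMeasure μ x (2 * dist x y) :=
          hμ.ballMeasure_le_of_subset (by positivity)
            (closedBall_subset_closedBall' (by rw [dist_comm]; linarith))
      _ ≤ D * ballMeasure μ x (dist x y) := hμ.ballMeasure_two_mul_le hD x hd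
  linarith

theorem qms_div_qms_le (hD : 0 ≤ D) {x a b : X} (hxa : x ≠ a) (hxb : x ≠ b) {s : ℝ} (hs : 0 ≤ s) :
    qms μ s x a / qms μ s x b ≤
      ((1 + D) * ballMeasure μ x (dist x a) / ballMeasure μ x (dist x b)) ^ s := by
  have hm (y : X) (r : ℝ) : 0 ≤ ballMeasure μ y r := ballMeasure_nonneg y r
  have hsum (y : X) (r : ℝ) : 0 ≤ ballMeasure μ x r + ballMeasure μ y r :=
    add_nonneg (hm x r) (hm y r)
  rw [hμ.qms_eq hxa, hμ.qms_eq hxb, ← Real.div_rpow (hsum _ _) (hsum _ _)]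
  refine Real.rpow_le_rpow (div_nonneg (hsum _ _) (hsum _ _)) ?_ hs
  exact div_le_div₀ (mul_nonneg (by linarith) (hm _ _)) (hμ.ballMeasure_add_ballMeasure_le hD hxa)
    (hμ.ballMeasure_pos x (dist_pos.2 hxb)) (le_add_of_nonneg_right (hm _ _))

end IsDoublingMeasure

namespace UniformlyPerfect

variable [OpensMeasurableSpace X] (hup : UniformlyPerfect X C) (hC : 1 ≤ C)
  (hμ : IsDoublingMeasure μ D) (hD : 1 ≤ D)
include hup hC hμ hD

theorem ballMeasure_reverse_doubling (x : X) {R : ℝ} (hR : 0 < R)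
    (hdiam : ENNReal.ofReal R ≤ ediam (univ : Set X)) :
    (1 + (D * (8 * C) ^ Real.logb 2 D)⁻¹) * ballMeasure μ x (R / (8 * C)) ≤
      ballMeasure μ x R := by
  obtain ⟨y, hy₁, hy₂⟩ :=
    hup x (R / 2) (by positivity) ((ENNReal.ofReal_le_ofReal (by linarith)).trans hdiam)
  have hC0 : 0 < C := by linarith
  set ρ := R / (8 * C)
  have hρ : 0 < ρ := by positivity
  have hRρ : R = 8 * C * ρ := by simp only [ρ]; field_simp
  have hy₁' : 4 * ρ ≤ dist x y := by
    rwa [hRρ, show 8 * C * ρ / 2 / C = 4 * ρ by field_simp; ring] at hy₁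
  have hxyR : dist x y + ρ ≤ R := by nlinarith
  have hsplit : ballMeasure μ x ρ + ballMeasure μ y ρ ≤ ballMeasure μ x R := by
    have hdisj : Disjoint (closedBall x ρ) (closedBall y ρ) :=
      closedBall_disjoint_closedBall (by linarith)
    have hsub : closedBall x ρ ∪ closedBall y ρ ⊆ closedBall x R :=
      union_subset (closedBall_subset_closedBall (by linarith))
        (closedBall_subset_closedBall' (by rw [dist_comm]; linarith))
    have h := ENNReal.toReal_mono (hμ.1 x R hR).2.ne
      ((measure_union hdisj measurableSet_closedBall).symm.trans_le (measure_mono hsub))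
    rwa [ENNReal.toReal_add (hμ.1 x ρ hρ).2.ne (hμ.1 y ρ hρ).2.ne] at h
  have hM : 0 < D * (8 * C) ^ Real.logb 2 D := by
    have := Real.rpow_pos_of_pos (show 0 < 8 * C by linarith) (Real.logb 2 D)
    positivity
  have hcompare : ballMeasure μ x ρ ≤ D * (8 * C) ^ Real.logb 2 D * ballMeasure μ y ρ :=
    calc ballMeasure μ x ρ ≤ ballMeasure μ y (8 * C * ρ) :=
          hμ.ballMeasure_le_of_subset (by positivity) (closedBall_subset_closedBall' (by linarith))
      _ ≤ D * (8 * C) ^ Real.logb 2 D * ballMeasure μ y ρ :=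
          hμ.ballMeasure_mul_le hD y hρ (by linarith)
  rw [← inv_mul_le_iff₀ hM] at hcompare
  linarith

theorem exists_ballMeasure_le_rpow_add_rpow :
    ∃ K A B : ℝ, 0 < K ∧ 0 < A ∧ 0 < B ∧ ∀ (x : X) (r R : ℝ), 0 < r → 0 < R →
      ENNReal.ofReal R ≤ ediam (univ : Set X) →
        ballMeasure μ x r ≤ K * ((r / R) ^ A + (r / R) ^ B) * ballMeasure μ x R := by
  set θ := 1 + (D * (8 * C) ^ Real.logb 2 D)⁻¹
  have hD0 : 0 < D := by linarith
  have hθ : 1 < θ := by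
    have := Real.rpow_pos_of_pos (show 0 < 8 * C by linarith) (Real.logb 2 D)
    exact lt_add_of_pos_right 1 (by positivity)
  have hθ0 : 0 < θ := by linarith
  set A := Real.logb (8 * C) θ
  set B := Real.logb 2 D + 1
  refine ⟨D * θ, A, B, by nlinarith, Real.logb_pos (by linarith) hθ,
    by linarith [Real.logb_nonneg one_lt_two hD], fun x r R hr hR hdiam => ?_⟩
  have htA := Real.rpow_nonneg (div_pos hr hR).le A
  have htB := Real.rpow_nonneg (div_pos hr hR).le B
  have hmR := ballMeasure_nonneg (μ := μ) x R
  rcases le_or_gt r R with hrR | hRr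
  · have hstep (ρ : ℝ) (hρ : 0 < ρ) (hρR : ρ ≤ R) :
        θ * ballMeasure μ x (ρ / (8 * C)) ≤ ballMeasure μ x ρ :=
      hup.ballMeasure_reverse_doubling hC hμ hD x hρ ((ENNReal.ofReal_le_ofReal hρR).trans hdiam)
    calc ballMeasure μ x r ≤ θ * (r / R) ^ A * ballMeasure μ x R :=
          le_mul_rpow_logb_of_forall_div_le (by linarith) hθ.le (hμ.monotoneOn_ballMeasure x)
            hstep hr hrR hmR
      _ ≤ D * θ * ((r / R) ^ A + (r / R) ^ B) * ballMeasure μ x R := by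
          gcongr ?_ * _
          nlinarith [mul_nonneg (mul_nonneg (sub_nonneg.2 hD) hθ0.le) htA,
            mul_nonneg (mul_nonneg hD0.le hθ0.le) htB]
  · have ht : 1 ≤ r / R := (one_le_div hR).2 hRr.le
    have hβB : (r / R) ^ Real.logb 2 D ≤ (r / R) ^ B :=
      Real.rpow_le_rpow_of_exponent_le ht (by linarith)
    calc ballMeasure μ x r = ballMeasure μ x (r / R * R) := by rw [div_mul_cancel₀ r hR.ne']
      _ ≤ D * (r / R) ^ Real.logb 2 D * ballMeasure μ x R := hμ.ballMeasure_mul_le hD x hR ht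
      _ ≤ D * θ * ((r / R) ^ A + (r / R) ^ B) * ballMeasure μ x R := by
          gcongr ?_ * _
          nlinarith [mul_le_mul_of_nonneg_left hβB hD0.le,
            mul_nonneg (mul_nonneg hD0.le (sub_nonneg.2 hθ.le)) htB,
            mul_nonneg (mul_nonneg hD0.le hθ0.le) htA]

end UniformlyPerfect

end

theorem stmt11 {X : Type*} [MetricSpace X]
    [MeasurableSpace X] [BorelSpace X]
    (C : ℝ) (hC : 1 ≤ C) (hup : UniformlyPerfect X C)
    (μ : Measure X) (D : ℝ) (hD : 1 ≤ D) (hμ : IsDoublingMeasure μ D) :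
    ∃ s₀ : ℝ, 0 < s₀ ∧
      ∀ s : ℝ, 0 < s → s ≤ s₀ →
        ∃ η : Homeomorph (Set.Ici (0:ℝ)) (Set.Ici (0:ℝ)),
          ∀ x a b : X, x ≠ a → x ≠ b → a ≠ b →
            qms μ s x a / qms μ s x b ≤
              (η ⟨dist x a / dist x b, Set.mem_Ici.mpr (by positivity)⟩ : ℝ) := by
  obtain ⟨K, A, B, hK, hA, hB, hball⟩ := hup.exists_ballMeasure_le_rpow_add_rpow hC hμ hD
  refine ⟨1, one_pos, fun s hs _ => ?_⟩
  obtain ⟨η, hη⟩ := exists_homeomorph_Ici_zero_eq_rpow_add_rpow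
    (mul_pos (by linarith : (0 : ℝ) < 1 + D) hK) hA hB hs
  refine ⟨η, fun x a b hxa hxb _ => ?_⟩
  have hxb' : 0 < dist x b := dist_pos.2 hxb
  have hdiam : ENNReal.ofReal (dist x b) ≤ ediam (univ : Set X) := by
    rw [← edist_dist]
    exact edist_le_ediam_of_mem (mem_univ x) (mem_univ b)
  refine (hμ.qms_div_qms_le (by linarith) hxa hxb hs.le).trans <| (Real.rpow_le_rpow
    (div_nonneg (mul_nonneg (by linarith) (ballMeasure_nonneg _ _)) (ballMeasure_nonneg _ _)) ?_
    hs.le).trans_eq (hη _ _).symm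
  rw [div_le_iff₀ (hμ.ballMeasure_pos x hxb')]
  exact (mul_le_mul_of_nonneg_left (hball x _ _ (dist_pos.2 hxa) hxb' hdiam)
    (by linarith : (0 : ℝ) ≤ 1 + D)).trans_eq (by ring)
end
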